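/- For any real a > 0 and positive integer n, ∑_{k=1}^{n} [ψ₀(k+a)² + ψ₁(k+a)]/(k+a) = (1/3)[ψ₂(a+n+1) − ψ₂(a+1) + 3ψ₀(a+n+1)ψ₁(a+n+1) − 3ψ₀(a+1)ψ₁(a+1) + ψ₀(a+n+1)³ − ψ₀(a+1)³]. -/

import Mathlib

/-!
Since `log Γ(x + 1) = log x + log Γ(x)`, each `ψₘ` satisfies `ψₘ(x + 1) = ψₘ(x) + (log)⁽ᵐ⁺¹⁾(x)`.
Feeding these recurrences into `B(x) = ψ₀(x)³ + 3ψ₀(x)ψ₁(x) + ψ₂(x)` gives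
`B(x + 1) - B(x) = 3(ψ₀(x)² + ψ₁(x))/x`, so the sum telescopes.
-/

open Finset

/-- The `m`-th polygamma function: the `(m+1)`-th derivative of `log ∘ Γ`. -/
noncomputable def psi (m : ℕ) (x : ℝ) : ℝ :=
  iteratedDeriv (m + 1) (fun y => Real.log (Real.Gamma y)) x

namespace Real

theorem analyticAt_Gamma {x : ℝ} (hx : ∀ m : ℕ, x ≠ -m) : AnalyticAt ℝ Gamma x := by
  have hx' : ∀ m : ℕ, (x : ℂ) ≠ -m := by exact_mod_cast hx
  have hΓ : AnalyticAt ℂ Complex.Gamma x :=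
    ((Complex.differentiable_one_div_Gamma.analyticAt (x : ℂ)).inv
      (inv_ne_zero (Complex.Gamma_ne_zero hx'))).congr
      (.of_forall fun s => by simp)
  simpa [Complex.Gamma_ofReal] using hΓ.re_ofReal

theorem contDiffAt_log_Gamma {x : ℝ} (hx : 0 < x) (n : WithTop ℕ∞) :
    ContDiffAt ℝ n (fun y => log (Gamma y)) x :=
  (analyticAt_Gamma fun m => by linarith [m.cast_nonneg (α := ℝ)]).contDiffAt.log
    (Gamma_pos_of_pos hx).ne'

theorem iteratedDeriv_succ_log (k : ℕ) (x : ℝ) :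
    iteratedDeriv (k + 1) log x = (-1) ^ k * k.factorial * x ^ (-1 - k : ℤ) := by
  rw [iteratedDeriv_succ', deriv_log', iteratedDeriv_eq_iterate, iter_deriv_inv]

end Real

theorem psi_add_one (m : ℕ) {x : ℝ} (hx : 0 < x) :
    psi m (x + 1) = psi m x + (-1) ^ m * m.factorial * x ^ (-1 - m : ℤ) := by
  have hshift : (fun y => Real.log (Real.Gamma (y + 1))) =ᶠ[nhds x]
      (fun y => Real.log y + Real.log (Real.Gamma y)) := by
    filter_upwards [Ioi_mem_nhds hx] with y hy
    rw [Real.Gamma_add_one hy.ne', Real.log_mul hy.ne' (Real.Gamma_pos_of_pos hy).ne']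
  have hlog : ContDiffAt ℝ (m + 1 : ℕ) Real.log x := Real.contDiffAt_log.mpr hx.ne'
  rw [psi, ← congrFun (iteratedDeriv_comp_add_const (m + 1) _ 1),
    (hshift.iteratedDeriv _).eq_of_nhds, iteratedDeriv_fun_add hlog (Real.contDiffAt_log_Gamma hx _),
    Real.iteratedDeriv_succ_log, psi, add_comm]

theorem psi_zero_add_one {x : ℝ} (hx : 0 < x) : psi 0 (x + 1) = psi 0 x + x⁻¹ := by
  simpa using psi_add_one 0 hx

theorem psi_one_add_one {x : ℝ} (hx : 0 < x) : psi 1 (x + 1) = psi 1 x - (x ^ 2)⁻¹ := by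
  simpa [sub_eq_add_neg, zpow_neg] using psi_add_one 1 hx

theorem psi_two_add_one {x : ℝ} (hx : 0 < x) : psi 2 (x + 1) = psi 2 x + 2 / x ^ 3 := by
  simpa [div_eq_mul_inv, zpow_neg] using psi_add_one 2 hx

/-- The complete Bell polynomial `B₃` evaluated at `(ψ₀, ψ₁, ψ₂)`; it equals `Γ'''/Γ`. -/
noncomputable def bellPsi (x : ℝ) : ℝ :=
  psi 0 x ^ 3 + 3 * psi 0 x * psi 1 x + psi 2 x

theorem bellPsi_add_one_sub {x : ℝ} (hx : 0 < x) :
    bellPsi (x + 1) - bellPsi x = 3 * (psi 0 x ^ 2 + psi 1 x) / x := by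
  rw [bellPsi, bellPsi, psi_zero_add_one hx, psi_one_add_one hx, psi_two_add_one hx]
  field_simp
  ring

theorem stmt_9_general (a : ℝ) (ha : 0 < a) (n : ℕ) :
    ∑ k ∈ Icc 1 n, ((psi 0 ((k : ℝ) + a))^2 + psi 1 ((k : ℝ) + a)) / ((k : ℝ) + a) =
      (1/3) * (psi 2 (a + n + 1) - psi 2 (a + 1) + 3 * psi 0 (a + n + 1) * psi 1 (a + n + 1) -
        3 * psi 0 (a + 1) * psi 1 (a + 1) + (psi 0 (a + n + 1))^3 - (psi 0 (a + 1))^3) := by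
  have hterm (k : ℕ) : ((psi 0 ((k : ℝ) + a))^2 + psi 1 ((k : ℝ) + a)) / ((k : ℝ) + a) =
      (1/3) * (bellPsi ((k + 1 : ℕ) + a) - bellPsi (k + a)) := by
    rw [Nat.cast_succ, add_right_comm, bellPsi_add_one_sub (by positivity)]
    ring
  have htelescope : ∑ k ∈ Icc 1 n, (bellPsi ((k + 1 : ℕ) + a) - bellPsi (k + a)) =
      bellPsi (a + n + 1) - bellPsi (a + 1) := by
    rw [← Ico_add_one_right_eq_Icc, sum_Ico_sub (fun k : ℕ => bellPsi (k + a)) (by omega)]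
    push_cast
    ring_nf
  rw [sum_congr rfl fun k _ => hterm k, ← mul_sum, htelescope, bellPsi, bellPsi]
  ring

theorem stmt_9 (a : ℝ) (ha : 0 < a) (n : ℕ) (hn : 0 < n) :
    ∑ k ∈ Icc 1 n, ((psi 0 ((k : ℝ) + a))^2 + psi 1 ((k : ℝ) + a)) / ((k : ℝ) + a) =
      (1/3) * (psi 2 (a + n + 1) - psi 2 (a + 1) + 3 * psi 0 (a + n + 1) * psi 1 (a + n + 1) -
        3 * psi 0 (a + 1) * psi 1 (a + 1) + (psi 0 (a + n + 1))^3 - (psi 0 (a + 1))^3) :=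
  stmt_9_general a ha n
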